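/- In 𝒢(Υ): (a) μσ(a·a⁻¹) = μσ(a⁻¹·a) for every a ∈ Z; (b) if u, v ∈ F satisfy u^α = v^α (i.e. uN = vN), then for every s ∈ 𝐫 and δ = ±1, μσ((ᵘs)^δ·(ᵘs)^{−δ}) = μσ((ᵛs)^δ·(ᵛs)^{−δ}); consequently, for the F-action on 𝒢(Υ) determined by ʷμσ(a) = μσ(ʷa), every element of 𝔘̂ is fixed by every w ∈ N. -/

import Mathlib

universe u

namespace Wh

variable {X : Type u}

/-- The set of symbols `(ᵘr)^ε` for a presentation with relators `rels`:
`u` is a word of the free group, `r` a relator and `eps` the sign (`true` for `+1`). -/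
structure Sym (X : Type u) (rels : Set (FreeGroup X)) where
  u : FreeGroup X
  r : rels
  eps : Bool

variable {rels : Set (FreeGroup X)}

/-- The formal inverse `(ᵘr)^{-ε}` of a symbol `(ᵘr)^ε`. -/
def Sym.symInv (a : Sym X rels) : Sym X rels := ⟨a.u, a.r, !a.eps⟩

/-- `θ((ᵘr)^ε) = u r^ε u⁻¹`. -/
def Sym.theta (a : Sym X rels) : FreeGroup X :=
  a.u * (if a.eps then (a.r : FreeGroup X) else (a.r : FreeGroup X)⁻¹) * a.u⁻¹

/-- The conjugate `ᵛ((ᵘr)^ε) = (^{vu}r)^ε`. -/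
def Sym.conj (v : FreeGroup X) (a : Sym X rels) : Sym X rels := ⟨v * a.u, a.r, a.eps⟩

/-- The defining relations of the monoid `Υ` : `a ⬝ b = (^{θ(a)}b) ⬝ a`. -/
def upsRel (rels : Set (FreeGroup X)) :
    FreeMonoid (Sym X rels) → FreeMonoid (Sym X rels) → Prop := fun x y =>
  ∃ a b : Sym X rels, x = FreeMonoid.of a * FreeMonoid.of b ∧
    y = FreeMonoid.of (Sym.conj (Sym.theta a) b) * FreeMonoid.of a

/-- The congruence on the free monoid on `Z` generated by the defining relations of `Υ`. -/
def upsCon (rels : Set (FreeGroup X)) : Con (FreeMonoid (Sym X rels)) := conGen (upsRel rels)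

/-- The monoid `Υ` presented on `Z` by the relations `a ⬝ b = (^{θ(a)}b) ⬝ a`. -/
abbrev Ups (rels : Set (FreeGroup X)) := (upsCon rels).Quotient

/-- The canonical epimorphism `σ : FM(Z) → Υ`. -/
def sigma (rels : Set (FreeGroup X)) : FreeMonoid (Sym X rels) →* Ups rels := (upsCon rels).mk'

/-- The submonoid `𝔘` of `Υ` generated by the elements `σ(a)σ(a⁻¹)`, `a ∈ Z`. -/
def UU (rels : Set (FreeGroup X)) : Submonoid (Ups rels) :=
  Submonoid.closure
    {x | ∃ a : Sym X rels, x = sigma rels (FreeMonoid.of a * FreeMonoid.of a.symInv)}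

/-- The monoid homomorphism `θ̄ : Υ → F` induced by `θ`. -/
def thetaBar (rels : Set (FreeGroup X)) : Ups rels →* FreeGroup X :=
  (upsCon rels).lift (FreeMonoid.lift Sym.theta) (by
    refine Con.conGen_le.2 fun x y h => ?_
    obtain ⟨a, b, rfl, rfl⟩ := h
    simp only [Con.ker_rel, map_mul, FreeMonoid.lift_eval_of]
    simp only [Sym.theta, Sym.conj]
    group)

/-- The relators of the group `𝒢(Υ)` : `a ⬝ b ⬝ ι((^{θ(a)}b) ⬝ a)`. -/
def grels (rels : Set (FreeGroup X)) : Set (FreeGroup (Sym X rels)) :=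
  {x | ∃ a b : Sym X rels, x = FreeGroup.of a * FreeGroup.of b *
      (FreeGroup.of (Sym.conj (Sym.theta a) b) * FreeGroup.of a)⁻¹}

/-- The universal enveloping group `𝒢(Υ)`. -/
abbrev GUps (rels : Set (FreeGroup X)) := PresentedGroup (grels rels)

/-- The canonical monoid homomorphism `μ : Υ → 𝒢(Υ)`. -/
def mu (rels : Set (FreeGroup X)) : Ups rels →* GUps rels :=
  (upsCon rels).lift (FreeMonoid.lift fun a => (PresentedGroup.of a : GUps rels)) (by
    refine Con.conGen_le.2 fun x y h => ?_
    obtain ⟨a, b, rfl, rfl⟩ := h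
    simp only [Con.ker_rel, map_mul, FreeMonoid.lift_eval_of]
    have h2 : (QuotientGroup.mk (FreeGroup.of a * FreeGroup.of b *
        (FreeGroup.of (Sym.conj (Sym.theta a) b) * FreeGroup.of a)⁻¹) : GUps rels) = 1 :=
      (QuotientGroup.eq_one_iff _).2 (Subgroup.subset_normalClosure ⟨a, b, rfl⟩)
    rw [QuotientGroup.mk_mul, QuotientGroup.mk_inv, QuotientGroup.mk_mul,
      QuotientGroup.mk_mul, mul_inv_eq_one] at h2
    exact h2)

/-- The subgroup `𝔘̂` of `𝒢(Υ)` generated by `μ(𝔘)`. -/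
def UUhat (rels : Set (FreeGroup X)) : Subgroup (GUps rels) :=
  Subgroup.closure (mu rels '' (UU rels : Set (Ups rels)))

/-- The group homomorphism `θ̃ : 𝒢(Υ) → F` induced by `θ`. -/
def thetaTilde (rels : Set (FreeGroup X)) : GUps rels →* FreeGroup X :=
  PresentedGroup.toGroup (f := Sym.theta) (by
    rintro x ⟨a, b, rfl⟩
    simp only [map_mul, map_inv, FreeGroup.lift_apply_of]
    simp only [Sym.theta, Sym.conj]
    group)

/-- Peiffer equivalence `~_𝔘` on `Υ` : the equivalence relation generated by the pairs
`(x, x ⬝ σ(a)σ(a⁻¹))`. -/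
def peifferEquiv (rels : Set (FreeGroup X)) : Ups rels → Ups rels → Prop :=
  Relation.EqvGen fun x y => ∃ a : Sym X rels,
    y = x * sigma rels (FreeMonoid.of a * FreeMonoid.of a.symInv)

/-- The weak dominion of a submonoid `U` of a monoid `S`. -/
def WDom (S : Type u) [Monoid S] (U : Submonoid S) : Set S :=
  {d | ∀ (G : Type u) [Group G] (f g : S →* G), (∀ u ∈ U, f u = g u) → f d = g d}

/-- The `F`-action on `𝒢(Υ)` determined by `ʷ(μσ(a)) = μσ(ʷa)`. -/
def actF (rels : Set (FreeGroup X)) (w : FreeGroup X) : GUps rels →* GUps rels :=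
  PresentedGroup.toGroup (f := fun a => (PresentedGroup.of (Sym.conj w a) : GUps rels)) (by
    rintro x ⟨a, b, rfl⟩
    simp only [map_mul, map_inv, FreeGroup.lift_apply_of]
    have key : Sym.conj w (Sym.conj (Sym.theta a) b) =
        Sym.conj (Sym.theta (Sym.conj w a)) (Sym.conj w b) := by
      rcases a with ⟨_, _, (_ | _)⟩ <;> simp [Sym.conj, Sym.theta, mul_assoc]
    rw [key]
    have h2 : (QuotientGroup.mk (FreeGroup.of (Sym.conj w a) * FreeGroup.of (Sym.conj w b) *
        (FreeGroup.of (Sym.conj (Sym.theta (Sym.conj w a)) (Sym.conj w b)) *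
          FreeGroup.of (Sym.conj w a))⁻¹) : GUps rels) = 1 :=
      (QuotientGroup.eq_one_iff _).2 (Subgroup.subset_normalClosure ⟨_, _, rfl⟩)
    rw [QuotientGroup.mk_mul, QuotientGroup.mk_inv, QuotientGroup.mk_mul,
      QuotientGroup.mk_mul] at h2
    exact h2)

/-!
Since `θ(a)θ(a⁻¹) = 1`, pushing a generator `b` of `𝒢(Υ)` through `a` and then through `a⁻¹` conjugates
it by `1`, so the insertion `μσ(a ⬝ a⁻¹)` is central; cancelling `a` gives (a). Pushing `b` through the
insertion the other way shows that conjugating `a` by `θ(b)` does not change its insertion, so the `w`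
that fix all insertions form a subgroup of `F` containing every `u r u⁻¹ = θ((ᵘr)^1)`, hence all of
`N`. This is (b), and (c) follows because `𝔘̂` is generated by the insertions.
-/

namespace Sym

lemma conj_conj (v w : FreeGroup X) (a : Sym X rels) : conj v (conj w a) = conj (v * w) a := by
  simp [conj, mul_assoc]

lemma conj_one (a : Sym X rels) : conj 1 a = a := by
  simp [conj]

lemma theta_mul_theta_symInv (a : Sym X rels) : theta a * theta a.symInv = 1 := by
  rcases a with ⟨u, r, _ | _⟩ <;> simp [theta, symInv]

end Sym

lemma mu_sigma_of (a : Sym X rels) :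
    mu rels (sigma rels (FreeMonoid.of a)) = PresentedGroup.of a :=
  (Con.lift_mk' _ _).trans (FreeMonoid.lift_eval_of _ _)

lemma of_mul_of (a b : Sym X rels) :
    (PresentedGroup.of a : GUps rels) * PresentedGroup.of b =
      PresentedGroup.of (Sym.conj (Sym.theta a) b) * PresentedGroup.of a := by
  have hrel : (QuotientGroup.mk (FreeGroup.of a * FreeGroup.of b *
      (FreeGroup.of (Sym.conj (Sym.theta a) b) * FreeGroup.of a)⁻¹) : GUps rels) = 1 :=
    (QuotientGroup.eq_one_iff _).2 (Subgroup.subset_normalClosure ⟨a, b, rfl⟩)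
  rwa [QuotientGroup.mk_mul, QuotientGroup.mk_inv, QuotientGroup.mk_mul,
    QuotientGroup.mk_mul, mul_inv_eq_one] at hrel

lemma actF_of (w : FreeGroup X) (a : Sym X rels) :
    actF rels w (PresentedGroup.of a) = PresentedGroup.of (Sym.conj w a) :=
  PresentedGroup.toGroup.of _

def insertion (a : Sym X rels) : GUps rels :=
  PresentedGroup.of a * PresentedGroup.of a.symInv

lemma mu_sigma_of_mul_of_symInv (a : Sym X rels) :
    mu rels (sigma rels (FreeMonoid.of a * FreeMonoid.of a.symInv)) = insertion a := by
  simp only [map_mul, mu_sigma_of, insertion]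

lemma actF_insertion (w : FreeGroup X) (a : Sym X rels) :
    actF rels w (insertion a) = insertion (Sym.conj w a) := by
  simp only [insertion, map_mul, actF_of]
  rfl

lemma commute_insertion_of (a b : Sym X rels) :
    Commute (insertion a) (PresentedGroup.of b) := by
  change (PresentedGroup.of a * PresentedGroup.of a.symInv) * PresentedGroup.of b = _
  rw [mul_assoc, of_mul_of a.symInv b, ← mul_assoc, of_mul_of a, Sym.conj_conj,
    Sym.theta_mul_theta_symInv, Sym.conj_one, mul_assoc]
  rfl

lemma insertion_conj_theta (b a : Sym X rels) :
    insertion (Sym.conj (Sym.theta b) a) = insertion a := by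
  have hpush : PresentedGroup.of b * insertion a =
      insertion (Sym.conj (Sym.theta b) a) * PresentedGroup.of b := by
    simp only [insertion, ← mul_assoc, of_mul_of b a]
    rw [mul_assoc _ (PresentedGroup.of b), of_mul_of b a.symInv, mul_assoc]
    rfl
  apply mul_right_cancel (b := (PresentedGroup.of b : GUps rels))
  rw [← hpush, (commute_insertion_of a b).eq]

variable (rels) in
def insertionStabilizer : Subgroup (FreeGroup X) where
  carrier := {w | ∀ a : Sym X rels, insertion (Sym.conj w a) = insertion a}
  one_mem' a := by rw [Sym.conj_one]
  mul_mem' {v w} hv hw a := by rw [← Sym.conj_conj, hv, hw]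
  inv_mem' {w} hw a := by
    rw [← hw (Sym.conj w⁻¹ a), Sym.conj_conj, mul_inv_cancel, Sym.conj_one]

lemma normalClosure_le_insertionStabilizer :
    Subgroup.normalClosure rels ≤ insertionStabilizer rels := by
  refine Subgroup.closure_le _ |>.2 fun x hx a => ?_
  obtain ⟨r, hr, hconj⟩ := Group.mem_conjugatesOfSet_iff.1 hx
  obtain ⟨c, rfl⟩ := isConj_iff.1 hconj
  have htheta : c * r * c⁻¹ = Sym.theta (⟨c, ⟨r, hr⟩, true⟩ : Sym X rels) := by
    simp [Sym.theta]
  rw [htheta]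
  exact insertion_conj_theta _ a

lemma insertion_conj_of_mem_normalClosure {w : FreeGroup X}
    (hw : w ∈ Subgroup.normalClosure rels) (a : Sym X rels) :
    insertion (Sym.conj w a) = insertion a :=
  normalClosure_le_insertionStabilizer hw a

lemma actF_eq_self_of_mem_UUhat {w : FreeGroup X} (hw : w ∈ Subgroup.normalClosure rels)
    {x : GUps rels} (hx : x ∈ UUhat rels) : actF rels w x = x := by
  have hUU : Set.EqOn ((actF rels w).comp (mu rels)) (mu rels) (UU rels) :=
    MonoidHom.eqOn_closureM fun _ ⟨a, ha⟩ => by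
      simp only [ha, MonoidHom.comp_apply, mu_sigma_of_mul_of_symInv, actF_insertion,
        insertion_conj_of_mem_normalClosure hw]
  have hUUhat : Set.EqOn (actF rels w) (MonoidHom.id _) (mu rels '' (UU rels)) := by
    rintro _ ⟨z, hz, rfl⟩
    exact hUU hz
  exact MonoidHom.eqOn_closure hUUhat hx

/-- In `𝒢(Υ)`: (a) `μσ(a ⬝ a⁻¹) = μσ(a⁻¹ ⬝ a)`; (b) if `uN = vN` then
`μσ((ᵘs)^δ (ᵘs)^{-δ}) = μσ((ᵛs)^δ (ᵛs)^{-δ})`; consequently (c) every element of `𝔘̂`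
is fixed by the action of every `w ∈ N`. -/
theorem mu_sigma_insertions (rels : Set (FreeGroup X)) :
    (∀ a : Sym X rels,
      mu rels (sigma rels (FreeMonoid.of a * FreeMonoid.of a.symInv)) =
        mu rels (sigma rels (FreeMonoid.of a.symInv * FreeMonoid.of a))) ∧
    (∀ u v : FreeGroup X,
      (QuotientGroup.mk u : FreeGroup X ⧸ Subgroup.normalClosure rels) = QuotientGroup.mk v →
      ∀ (s : rels) (δ : Bool),
        mu rels (sigma rels (FreeMonoid.of (⟨u, s, δ⟩ : Sym X rels) *
            FreeMonoid.of (Sym.symInv ⟨u, s, δ⟩))) =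
          mu rels (sigma rels (FreeMonoid.of (⟨v, s, δ⟩ : Sym X rels) *
            FreeMonoid.of (Sym.symInv ⟨v, s, δ⟩)))) ∧
    (∀ w ∈ Subgroup.normalClosure rels, ∀ x ∈ UUhat rels, actF rels w x = x) := by
  refine ⟨fun a => ?_, fun u v huv s δ => ?_, fun w hw x hx => actF_eq_self_of_mem_UUhat hw hx⟩
  · simp only [map_mul, mu_sigma_of]
    refine (mul_left_cancel (a := (PresentedGroup.of a : GUps rels)) ?_).symm
    rw [← mul_assoc, ← mul_assoc]
    exact (commute_insertion_of a a).eq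
  · have hN : u / v ∈ Subgroup.normalClosure rels := QuotientGroup.eq_iff_div_mem.1 huv
    have hconj : (⟨u, s, δ⟩ : Sym X rels) = Sym.conj (u / v) ⟨v, s, δ⟩ := by
      simp [Sym.conj]
    rw [mu_sigma_of_mul_of_symInv, mu_sigma_of_mul_of_symInv, hconj,
      insertion_conj_of_mem_normalClosure hN]

end Wh
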